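/- arXiv:2601.00732 — 3 statements merged into one kernel-verified Lean document; each statement's English description precedes it below -/
import Mathlib

section
/- Let τ, γ, η > 0 and c ∈ ℝ. Consider the first-order VAC dynamics ẋ(t) = −τ^{-1}( x(t) − γ(−ρ(t)) − c ), u(t) = x(t) + η(−ρ(t)), and fix an equilibrium input −ρ* with corresponding equilibrium state x* = γ(−ρ*) + c and equilibrium output u* = x* + η(−ρ*). Define the storage function V(x) = (τ/(2γ)) (x − x*)². Then V(x*) = 0, V(x) > 0 for x ≠ x*, and along every differentiable trajectory (x(t), ρ(t)) of these dynamics, dV(x(t))/dt = (u(t) − u*)(−ρ(t) − (−ρ*)) − η(ρ(t) − ρ*)² − (1/γ)(x(t) − x*)² ≤ (u(t) − u*)(−ρ(t) − (−ρ*)) − η(ρ(t) − ρ*)². In particular, the first-order VAC dynamics are input strictly passive about (x*, −ρ*) with rate η. -/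
/-- The first-order VAC dynamics
`ẋ = −τ⁻¹(x − γ(−ρ) − c)`, `u = x + η(−ρ)` with equilibrium
`x* = γ(−ρ*) + c`, `u* = x* + η(−ρ*)` are input strictly passive about
`(x*, −ρ*)` with rate `η`: the storage function `V(x) = (τ/(2γ))(x − x*)²`
satisfies `V(x*) = 0`, `V > 0` elsewhere, and along every trajectory
`dV/dt = (u − u*)(−ρ − (−ρ*)) − η(ρ − ρ*)² − (1/γ)(x − x*)²
       ≤ (u − u*)(−ρ − (−ρ*)) − η(ρ − ρ*)²`. -/
theorem first_order_vac_input_strict_passivity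
    (τ γ η : ℝ) (hτ : 0 < τ) (hγ : 0 < γ) (hη : 0 < η) (c ρs : ℝ)
    (xs us : ℝ) (hxs : xs = γ * (-ρs) + c) (hus : us = xs + η * (-ρs))
    (V : ℝ → ℝ) (hV : ∀ xv, V xv = τ / (2 * γ) * (xv - xs) ^ 2)
    (x ρ u : ℝ → ℝ)
    (hx : ∀ t, HasDerivAt x (-τ⁻¹ * (x t - γ * (-ρ t) - c)) t)
    (hu : ∀ t, u t = x t + η * (-ρ t)) :
    V xs = 0 ∧ (∀ xv, xv ≠ xs → 0 < V xv) ∧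
    ∀ t, HasDerivAt (fun s => V (x s))
        ((u t - us) * (-ρ t - (-ρs)) - η * (ρ t - ρs) ^ 2
          - (1 / γ) * (x t - xs) ^ 2) t
      ∧ (u t - us) * (-ρ t - (-ρs)) - η * (ρ t - ρs) ^ 2
          - (1 / γ) * (x t - xs) ^ 2
        ≤ (u t - us) * (-ρ t - (-ρs)) - η * (ρ t - ρs) ^ 2 := by
  refine ⟨by simp [hV], fun xv hxv => by
    have h0 : xv - xs ≠ 0 := sub_ne_zero.mpr hxv
    rw [hV]; positivity, fun t => ?_⟩
  constructor
  · have h1 : HasDerivAt (fun s => τ / (2 * γ) * (x s - xs) ^ 2)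
        (τ / (2 * γ) * (2 * (x t - xs) * (-τ⁻¹ * (x t - γ * (-ρ t) - c)))) t := by
      have h2 := ((hx t).sub_const xs).pow 2
      simpa [mul_comm, mul_assoc, mul_left_comm] using h2.const_mul (τ / (2 * γ))
    simp only [hV]
    convert h1 using 1
    rw [hu t, hus, hxs]
    field_simp
    ring
  · have h3 : 0 ≤ (1 / γ) * (x t - xs) ^ 2 := by positivity
    linarith
end

section
/- Let τ, γ, η, υ > 0 and c ∈ ℝ. Consider the integrator-augmented first-order VAC dynamics ẋ(t) = −τ^{-1}( x(t) − γ(−ρ(t)) − c ), ũ(t) = x(t) + η(−ρ(t)), ż(t) = (1/υ)(−ρ(t) − (−ρ*)), u(t) = ũ(t) + z(t), where ρ* is a prescribed density set-point. Fix an equilibrium (x*, −ρ*, z*) with x* = γ(−ρ*) + c, ũ* = x* + η(−ρ*), and u* = ũ* + z*. Define V(x, z) = (τ/(2γ))(x − x*)² + (υ/2)(z − z*)². Then V(x*, z*) = 0, V > 0 elsewhere, and along every differentiable trajectory of these dynamics, dV(x(t), z(t))/dt ≤ (u(t) − u*)(−ρ(t) − (−ρ*)) − η(ρ(t) − ρ*)².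 In particular, the integrator-augmented first-order VAC scheme is input strictly passive about (x*, −ρ*, z*) with rate η. -/
/-!
Along the dynamics, the lag storage `(τ/(2γ))(x − x*)²` changes at rate
`(x − x*)(v − v*) − (x − x*)²/γ` and the integrator storage `(υ/2)(z − z*)²` at rate
`(z − z*)(v − v*)`, where `v = −ρ`. Since `u − u* = (x − x*) + η(v − v*) + (z − z*)`,
the supply rate minus `η(v − v*)²` is exactly the sum of the two cross terms, so
`dV/dt` falls short of it by `(x − x*)²/γ ≥ 0`.
-/

theorem weighted_sq_add_sq_pos_of_ne {a b : ℝ} (ha : 0 < a) (hb : 0 < b) {p q p₀ q₀ : ℝ}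
    (h : (p, q) ≠ (p₀, q₀)) : 0 < a * (p - p₀) ^ 2 + b * (q - q₀) ^ 2 := by
  simp only [ne_eq, Prod.mk.injEq, not_and_or] at h
  rcases h with hp | hq
  · have := sub_ne_zero.2 hp
    positivity
  · have := sub_ne_zero.2 hq
    positivity

theorem hasDerivAt_lag_storage {τ γ c v v₀ t : ℝ} {x : ℝ → ℝ} (hτ : τ ≠ 0) (hγ : γ ≠ 0)
    (hx : HasDerivAt x (-τ⁻¹ * (x t - γ * v - c)) t) :
    HasDerivAt (fun s => τ / (2 * γ) * (x s - (γ * v₀ + c)) ^ 2)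
      ((x t - (γ * v₀ + c)) * (v - v₀) - (x t - (γ * v₀ + c)) ^ 2 / γ) t := by
  refine (((hx.sub_const _).pow 2).const_mul _).congr_deriv ?_
  field_simp
  ring

theorem hasDerivAt_integrator_storage {υ w w₀ z₀ t : ℝ} {z : ℝ → ℝ} (hυ : υ ≠ 0)
    (hz : HasDerivAt z (1 / υ * (w - w₀)) t) :
    HasDerivAt (fun s => υ / 2 * (z s - z₀) ^ 2) ((z t - z₀) * (w - w₀)) t := by
  refine (((hz.sub_const _).pow 2).const_mul _).congr_deriv ?_
  field_simp
  ring

theorem integrator_augmented_first_order_vac_input_strict_passivity_general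
    (τ γ η υ : ℝ) (hτ : 0 < τ) (hγ : 0 < γ) (hυ : 0 < υ)
    (c ρs : ℝ) (xs uts zs us : ℝ)
    (hxs : xs = γ * (-ρs) + c) (huts : uts = xs + η * (-ρs))
    (hus : us = uts + zs)
    (V : ℝ → ℝ → ℝ)
    (hV : ∀ xv zv, V xv zv = τ / (2 * γ) * (xv - xs) ^ 2 + υ / 2 * (zv - zs) ^ 2)
    (x ρ z ut u : ℝ → ℝ)
    (hx : ∀ t, HasDerivAt x (-τ⁻¹ * (x t - γ * (-ρ t) - c)) t)
    (hut : ∀ t, ut t = x t + η * (-ρ t))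
    (hz : ∀ t, HasDerivAt z ((1 / υ) * (-ρ t - (-ρs))) t)
    (hu : ∀ t, u t = ut t + z t) :
    V xs zs = 0 ∧ (∀ xv zv, (xv, zv) ≠ (xs, zs) → 0 < V xv zv) ∧
    ∀ t, ∃ D : ℝ, HasDerivAt (fun s => V (x s) (z s)) D t ∧
      D ≤ (u t - us) * (-ρ t - (-ρs)) - η * (ρ t - ρs) ^ 2 := by
  subst hxs huts hus
  have hweight : 0 < τ / (2 * γ) := by positivity
  refine ⟨by simp [hV], fun xv zv hne => hV xv zv ▸
    weighted_sq_add_sq_pos_of_ne hweight (half_pos hυ) hne, fun t => ?_⟩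
  have hVx := hasDerivAt_lag_storage (v₀ := -ρs) hτ.ne' hγ.ne' (hx t)
  have hVz := hasDerivAt_integrator_storage (z₀ := zs) hυ.ne' (hz t)
  refine ⟨_, (hVx.add hVz).congr_of_eventuallyEq (.of_forall fun s => hV _ _), ?_⟩
  have hdissipation : 0 ≤ (x t - (γ * -ρs + c)) ^ 2 / γ := by positivity
  rw [hu, hut]
  linarith

/-- The integrator-augmented first-order VAC dynamics
`ẋ = −τ⁻¹(x − γ(−ρ) − c)`, `ũ = x + η(−ρ)`, `ż = (1/υ)(−ρ − (−ρ*))`,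
`u = ũ + z`, with equilibrium `x* = γ(−ρ*) + c`, `ũ* = x* + η(−ρ*)`,
`u* = ũ* + z*`, are input strictly passive about `(x*, −ρ*, z*)` with rate
`η`: the storage function `V(x,z) = (τ/(2γ))(x − x*)² + (υ/2)(z − z*)²`
satisfies `V(x*,z*) = 0`, `V > 0` elsewhere, and along every differentiable
trajectory `dV/dt ≤ (u − u*)(−ρ − (−ρ*)) − η(ρ − ρ*)²`. -/
theorem integrator_augmented_first_order_vac_input_strict_passivity
    (τ γ η υ : ℝ) (hτ : 0 < τ) (hγ : 0 < γ) (hη : 0 < η) (hυ : 0 < υ)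
    (c ρs : ℝ) (xs uts zs us : ℝ)
    (hxs : xs = γ * (-ρs) + c) (huts : uts = xs + η * (-ρs))
    (hus : us = uts + zs)
    (V : ℝ → ℝ → ℝ)
    (hV : ∀ xv zv, V xv zv = τ / (2 * γ) * (xv - xs) ^ 2 + υ / 2 * (zv - zs) ^ 2)
    (x ρ z ut u : ℝ → ℝ)
    (hx : ∀ t, HasDerivAt x (-τ⁻¹ * (x t - γ * (-ρ t) - c)) t)
    (hut : ∀ t, ut t = x t + η * (-ρ t))
    (hz : ∀ t, HasDerivAt z ((1 / υ) * (-ρ t - (-ρs))) t)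
    (hu : ∀ t, u t = ut t + z t) :
    V xs zs = 0 ∧ (∀ xv zv, (xv, zv) ≠ (xs, zs) → 0 < V xv zv) ∧
    ∀ t, ∃ D : ℝ, HasDerivAt (fun s => V (x s) (z s)) D t ∧
      D ≤ (u t - us) * (-ρ t - (-ρs)) - η * (ρ t - ρs) ^ 2 :=
  integrator_augmented_first_order_vac_input_strict_passivity_general τ γ η υ hτ hγ hυ c ρs xs uts
    zs us hxs huts hus V hV x ρ z ut u hx hut hz hu
end

section
/- Let N be a finite index set and E ⊆ N × N a set of directed edges with predecessor sets P_i and successor sets S_i. For each i ∈ N, let f_i, d_i : ℝ → ℝ be Lipschitz with constants v^L_i, v^{d,L}_i, let r_i ≥ 0, η_i ∈ ℝ, and w_{ji} ≥ 0 for each (j,i) ∈ E, and set a_{ji} = w_{ji}( r_j v^L_j + v^{d,L}_j ). Suppose there exist ξ_{ji} > 0 for each (j,i) ∈ E such that for every i ∈ N, η_i > v^{d,L}_i + r_i v^L_i + Σ_{j∈P_i} a_{ji}/(2 ξ_{ji}) + Σ_{j∈S_i} ξ_{ij} a_{ij}/2, and set ζ_i := η_i − ( v^{d,L}_i + r_i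 v^L_i + Σ_{j∈P_i} a_{ji}/(2 ξ_{ji}) + Σ_{j∈S_i} ξ_{ij} a_{ij}/2 ) > 0. Fix ρ*, and define for each ρ the quantity W(ρ) = Σ_{i∈N} [ (ρ_i − ρ_i*) ( −r_i (f_i(ρ_i) − f_i(ρ_i*)) − (d_i(ρ_i) − d_i(ρ_i*)) + Σ_{j∈P_i} w_{ji}( r_j (f_j(ρ_j) − f_j(ρ_j*)) + (d_j(ρ_j) − d_j(ρ_j*)) ) ) − η_i (ρ_i − ρ_i*)² ]. Then W(ρ) ≤ −Σ_{i∈N} ζ_i (ρ_i − ρ_i*)² for all ρ; in particular W(ρ*) = 0 and W(ρ) < 0 whenever ρ ≠ ρ*. -/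
open Finset

/-- Core negative-definiteness estimate in the proof of Theorem 1.
Under the gain condition
`η_i > v^{d,L}_i + r_i v^L_i + Σ_{j∈P_i} a_{ji}/(2ξ_{ji}) + Σ_{j∈S_i} ξ_{ij} a_{ij}/2`
(with `a_{ji} = w_{ji}(r_j v^L_j + v^{d,L}_j)` and `ξ_{ji} > 0` on edges), the
quantity `W(ρ)` that upper bounds the Lyapunov derivative satisfies
`W(ρ) ≤ −Σ_i ζ_i (ρ_i − ρ_i*)²` with
`ζ_i = η_i − (v^{d,L}_i + r_i v^L_i + Σ_{j∈P_i} a_{ji}/(2ξ_{ji}) + Σ_{j∈S_i} ξ_{ij} a_{ij}/2) > 0`;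
in particular `W(ρ*) = 0` and `W(ρ) < 0` for `ρ ≠ ρ*`. -/
theorem lyapunov_core_negative_definite_estimate
    {ι : Type*} [Fintype ι] [DecidableEq ι]
    (E : Finset (ι × ι)) (f d : ι → ℝ → ℝ) (vL vdL r η : ι → ℝ)
    (w ξ a : ι → ι → ℝ)
    (hf : ∀ i x y, |f i x - f i y| ≤ vL i * |x - y|)
    (hd : ∀ i x y, |d i x - d i y| ≤ vdL i * |x - y|)
    (hr : ∀ i, 0 ≤ r i) (hw : ∀ p ∈ E, 0 ≤ w p.1 p.2)
    (ha : ∀ j i, a j i = w j i * (r j * vL j + vdL j))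
    (hξ : ∀ p ∈ E, 0 < ξ p.1 p.2)
    (hη : ∀ i, vdL i + r i * vL i
        + ∑ j ∈ univ.filter (fun j => (j, i) ∈ E), a j i / (2 * ξ j i)
        + ∑ j ∈ univ.filter (fun j => (i, j) ∈ E), ξ i j * a i j / 2 < η i)
    (ρs : ι → ℝ) (W : (ι → ℝ) → ℝ)
    (hW : ∀ ρ, W ρ = ∑ i,
        ((ρ i - ρs i) *
          (-(r i) * (f i (ρ i) - f i (ρs i)) - (d i (ρ i) - d i (ρs i))
            + ∑ j ∈ univ.filter (fun j => (j, i) ∈ E),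
                w j i * (r j * (f j (ρ j) - f j (ρs j)) + (d j (ρ j) - d j (ρs j))))
          - η i * (ρ i - ρs i) ^ 2)) :
    (∀ ρ, W ρ ≤ -∑ i,
        (η i - (vdL i + r i * vL i
          + ∑ j ∈ univ.filter (fun j => (j, i) ∈ E), a j i / (2 * ξ j i)
          + ∑ j ∈ univ.filter (fun j => (i, j) ∈ E), ξ i j * a i j / 2))
          * (ρ i - ρs i) ^ 2)
    ∧ W ρs = 0
    ∧ ∀ ρ, ρ ≠ ρs → W ρ < 0 := by
  have hvL : ∀ i, 0 ≤ vL i := by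
    intro i
    have h := hf i 1 0
    have h0 : (0:ℝ) ≤ |f i 1 - f i 0| := abs_nonneg _
    simp only [sub_zero, abs_one, mul_one] at h
    linarith
  have hvdL : ∀ i, 0 ≤ vdL i := by
    intro i
    have h := hd i 1 0
    have h0 : (0:ℝ) ≤ |d i 1 - d i 0| := abs_nonneg _
    simp only [sub_zero, abs_one, mul_one] at h
    linarith
  have swap : ∀ F : ι → ι → ℝ,
      ∑ i, ∑ j ∈ univ.filter (fun j => (j, i) ∈ E), F j i
        = ∑ i, ∑ j ∈ univ.filter (fun j => (i, j) ∈ E), F i j := by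
    intro F
    simp only [Finset.sum_filter]
    exact Finset.sum_comm
  have key : ∀ ρ : ι → ℝ, W ρ ≤ -∑ i,
      (η i - (vdL i + r i * vL i
        + ∑ j ∈ univ.filter (fun j => (j, i) ∈ E), a j i / (2 * ξ j i)
        + ∑ j ∈ univ.filter (fun j => (i, j) ∈ E), ξ i j * a i j / 2))
        * (ρ i - ρs i) ^ 2 := by
    intro ρ
    rw [hW]
    have step1 : ∀ i ∈ univ, (ρ i - ρs i) *
          (-(r i) * (f i (ρ i) - f i (ρs i)) - (d i (ρ i) - d i (ρs i))
            + ∑ j ∈ univ.filter (fun j => (j, i) ∈ E),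
                w j i * (r j * (f j (ρ j) - f j (ρs j)) + (d j (ρ j) - d j (ρs j))))
          - η i * (ρ i - ρs i) ^ 2
        ≤ ((vdL i + r i * vL i) * (ρ i - ρs i)^2 - η i * (ρ i - ρs i)^2
          + ∑ j ∈ univ.filter (fun j => (j, i) ∈ E),
              a j i * ((ρ i - ρs i)^2 / (2 * ξ j i) + ξ j i * (ρ j - ρs j)^2 / 2)) := by
      intro i _
      have h1 : (ρ i - ρs i) * (-(r i) * (f i (ρ i) - f i (ρs i)) - (d i (ρ i) - d i (ρs i)))
          ≤ (vdL i + r i * vL i) * (ρ i - ρs i)^2 := by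
        have hF := hf i (ρ i) (ρs i)
        have hD := hd i (ρ i) (ρs i)
        have hX : |(-(r i) * (f i (ρ i) - f i (ρs i)) - (d i (ρ i) - d i (ρs i)))|
            ≤ (vdL i + r i * vL i) * |ρ i - ρs i| := by
          calc |(-(r i) * (f i (ρ i) - f i (ρs i)) - (d i (ρ i) - d i (ρs i)))|
              ≤ |(-(r i)) * (f i (ρ i) - f i (ρs i))| + |d i (ρ i) - d i (ρs i)| :=
                abs_sub _ _
            _ = r i * |f i (ρ i) - f i (ρs i)| + |d i (ρ i) - d i (ρs i)| := by
                rw [abs_mul, abs_neg, abs_of_nonneg (hr i)]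
            _ ≤ r i * (vL i * |ρ i - ρs i|) + vdL i * |ρ i - ρs i| :=
                add_le_add (mul_le_mul_of_nonneg_left hF (hr i)) hD
            _ = (vdL i + r i * vL i) * |ρ i - ρs i| := by ring
        calc (ρ i - ρs i) * (-(r i) * (f i (ρ i) - f i (ρs i)) - (d i (ρ i) - d i (ρs i)))
            ≤ |(ρ i - ρs i) * (-(r i) * (f i (ρ i) - f i (ρs i)) - (d i (ρ i) - d i (ρs i)))| :=
              le_abs_self _
          _ = |ρ i - ρs i| * |(-(r i) * (f i (ρ i) - f i (ρs i)) - (d i (ρ i) - d i (ρs i)))| :=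
              abs_mul _ _
          _ ≤ |ρ i - ρs i| * ((vdL i + r i * vL i) * |ρ i - ρs i|) :=
              mul_le_mul_of_nonneg_left hX (abs_nonneg _)
          _ = (vdL i + r i * vL i) * (ρ i - ρs i)^2 := by
              rw [show (ρ i - ρs i)^2 = |ρ i - ρs i| * |ρ i - ρs i| by
                rw [abs_mul_abs_self, sq]]
              ring
      have h2 : ∀ j ∈ univ.filter (fun j => (j, i) ∈ E),
          (ρ i - ρs i) * (w j i * (r j * (f j (ρ j) - f j (ρs j)) + (d j (ρ j) - d j (ρs j))))
            ≤ a j i * ((ρ i - ρs i)^2 / (2 * ξ j i) + ξ j i * (ρ j - ρs j)^2 / 2) := by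
        intro j hj
        simp only [Finset.mem_filter] at hj
        have hje : (j, i) ∈ E := hj.2
        have hw' : 0 ≤ w j i := hw (j, i) hje
        have hξ' : 0 < ξ j i := hξ (j, i) hje
        have hF := hf j (ρ j) (ρs j)
        have hD := hd j (ρ j) (ρs j)
        have ha' : 0 ≤ a j i := by
          rw [ha]
          exact mul_nonneg hw' (by nlinarith [hvL j, hvdL j, hr j])
        have hb1 : (ρ i - ρs i) *
              (w j i * (r j * (f j (ρ j) - f j (ρs j)) + (d j (ρ j) - d j (ρs j))))
            ≤ a j i * (|ρ i - ρs i| * |ρ j - ρs j|) := by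
          have hX : |r j * (f j (ρ j) - f j (ρs j)) + (d j (ρ j) - d j (ρs j))|
              ≤ (r j * vL j + vdL j) * |ρ j - ρs j| := by
            calc |r j * (f j (ρ j) - f j (ρs j)) + (d j (ρ j) - d j (ρs j))|
                ≤ |r j * (f j (ρ j) - f j (ρs j))| + |d j (ρ j) - d j (ρs j)| := abs_add_le _ _
              _ ≤ r j * (vL j * |ρ j - ρs j|) + vdL j * |ρ j - ρs j| := by
                  rw [abs_mul, abs_of_nonneg (hr j)]
                  exact add_le_add (mul_le_mul_of_nonneg_left hF (hr j)) hD
              _ = (r j * vL j + vdL j) * |ρ j - ρs j| := by ring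
          calc (ρ i - ρs i) *
                (w j i * (r j * (f j (ρ j) - f j (ρs j)) + (d j (ρ j) - d j (ρs j))))
              ≤ |(ρ i - ρs i) *
                  (w j i * (r j * (f j (ρ j) - f j (ρs j)) + (d j (ρ j) - d j (ρs j))))| :=
                le_abs_self _
            _ = |ρ i - ρs i| *
                  (w j i * |r j * (f j (ρ j) - f j (ρs j)) + (d j (ρ j) - d j (ρs j))|) := by
                rw [abs_mul, abs_mul, abs_of_nonneg hw']
            _ ≤ |ρ i - ρs i| * (w j i * ((r j * vL j + vdL j) * |ρ j - ρs j|)) := by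
                apply mul_le_mul_of_nonneg_left _ (abs_nonneg _)
                exact mul_le_mul_of_nonneg_left hX hw'
            _ = a j i * (|ρ i - ρs i| * |ρ j - ρs j|) := by rw [ha]; ring
        have hb2 : |ρ i - ρs i| * |ρ j - ρs j|
            ≤ (ρ i - ρs i)^2 / (2 * ξ j i) + ξ j i * (ρ j - ρs j)^2 / 2 := by
          rw [div_add_div _ _ (by positivity : (2 : ℝ) * ξ j i ≠ 0) (two_ne_zero),
            le_div_iff₀ (by positivity)]
          have hAi : |ρ i - ρs i| ^ 2 = (ρ i - ρs i) ^ 2 := sq_abs _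
          have hBj : ξ j i ^ 2 * |ρ j - ρs j| ^ 2 = ξ j i ^ 2 * (ρ j - ρs j) ^ 2 := by
            rw [sq_abs]
          nlinarith [sq_nonneg (|ρ i - ρs i| - ξ j i * |ρ j - ρs j|)]
        calc (ρ i - ρs i) *
              (w j i * (r j * (f j (ρ j) - f j (ρs j)) + (d j (ρ j) - d j (ρs j))))
            ≤ a j i * (|ρ i - ρs i| * |ρ j - ρs j|) := hb1
          _ ≤ a j i * ((ρ i - ρs i)^2 / (2 * ξ j i) + ξ j i * (ρ j - ρs j)^2 / 2) :=
              mul_le_mul_of_nonneg_left hb2 ha'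
      have hsum := Finset.sum_le_sum h2
      rw [mul_add, Finset.mul_sum]
      linarith
    refine le_trans (Finset.sum_le_sum step1) (le_of_eq ?_)
    have expand : ∀ i, ((vdL i + r i * vL i) * (ρ i - ρs i)^2 - η i * (ρ i - ρs i)^2
          + ∑ j ∈ univ.filter (fun j => (j, i) ∈ E),
              a j i * ((ρ i - ρs i)^2 / (2 * ξ j i) + ξ j i * (ρ j - ρs j)^2 / 2))
        = ((vdL i + r i * vL i - η i
            + ∑ j ∈ univ.filter (fun j => (j, i) ∈ E), a j i / (2 * ξ j i)) * (ρ i - ρs i)^2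
          + ∑ j ∈ univ.filter (fun j => (j, i) ∈ E), (ξ j i * a j i / 2) * (ρ j - ρs j)^2) := by
      intro i
      have hsplit : ∑ j ∈ univ.filter (fun j => (j, i) ∈ E),
            a j i * ((ρ i - ρs i)^2 / (2 * ξ j i) + ξ j i * (ρ j - ρs j)^2 / 2)
          = ∑ j ∈ univ.filter (fun j => (j, i) ∈ E), (a j i / (2 * ξ j i)) * (ρ i - ρs i)^2
            + ∑ j ∈ univ.filter (fun j => (j, i) ∈ E), (ξ j i * a j i / 2) * (ρ j - ρs j)^2 := by
        rw [← Finset.sum_add_distrib]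
        exact Finset.sum_congr rfl fun j _ => by ring
      rw [hsplit, ← Finset.sum_mul]
      ring
    calc ∑ i, ((vdL i + r i * vL i) * (ρ i - ρs i)^2 - η i * (ρ i - ρs i)^2
          + ∑ j ∈ univ.filter (fun j => (j, i) ∈ E),
              a j i * ((ρ i - ρs i)^2 / (2 * ξ j i) + ξ j i * (ρ j - ρs j)^2 / 2))
        = ∑ i, ((vdL i + r i * vL i - η i
            + ∑ j ∈ univ.filter (fun j => (j, i) ∈ E), a j i / (2 * ξ j i)) * (ρ i - ρs i)^2)
          + ∑ i, ∑ j ∈ univ.filter (fun j => (j, i) ∈ E),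
              (ξ j i * a j i / 2) * (ρ j - ρs j)^2 := by
          rw [← Finset.sum_add_distrib]
          exact Finset.sum_congr rfl fun i _ => expand i
      _ = ∑ i, ((vdL i + r i * vL i - η i
            + ∑ j ∈ univ.filter (fun j => (j, i) ∈ E), a j i / (2 * ξ j i)) * (ρ i - ρs i)^2)
          + ∑ i, (∑ j ∈ univ.filter (fun j => (i, j) ∈ E), ξ i j * a i j / 2)
              * (ρ i - ρs i)^2 := by
          rw [swap (fun j i => (ξ j i * a j i / 2) * (ρ j - ρs j)^2)]
          congr 1
          exact Finset.sum_congr rfl fun i _ => (Finset.sum_mul _ _ _).symm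
      _ = -∑ i, (η i - (vdL i + r i * vL i
            + ∑ j ∈ univ.filter (fun j => (j, i) ∈ E), a j i / (2 * ξ j i)
            + ∑ j ∈ univ.filter (fun j => (i, j) ∈ E), ξ i j * a i j / 2))
              * (ρ i - ρs i)^2 := by
          rw [← Finset.sum_add_distrib, ← Finset.sum_neg_distrib]
          exact Finset.sum_congr rfl fun i _ => by ring
  have hζ : ∀ i, 0 < η i - (vdL i + r i * vL i
      + ∑ j ∈ univ.filter (fun j => (j, i) ∈ E), a j i / (2 * ξ j i)
      + ∑ j ∈ univ.filter (fun j => (i, j) ∈ E), ξ i j * a i j / 2) := by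
    intro i; linarith [hη i]
  refine ⟨key, ?_, ?_⟩
  · rw [hW]
    apply Finset.sum_eq_zero
    intro i _
    simp
  · intro ρ hne
    have hk := key ρ
    have hpos : 0 < ∑ i, (η i - (vdL i + r i * vL i
        + ∑ j ∈ univ.filter (fun j => (j, i) ∈ E), a j i / (2 * ξ j i)
        + ∑ j ∈ univ.filter (fun j => (i, j) ∈ E), ξ i j * a i j / 2))
        * (ρ i - ρs i) ^ 2 := by
      obtain ⟨i, hi⟩ : ∃ i, ρ i ≠ ρs i := by
        by_contra h
        push_neg at h
        exact hne (funext h)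
      apply Finset.sum_pos'
      · intro i _
        exact mul_nonneg (hζ i).le (sq_nonneg _)
      · refine ⟨i, Finset.mem_univ i, mul_pos (hζ i) ?_⟩
        have h0 : ρ i - ρs i ≠ 0 := sub_ne_zero_of_ne hi
        exact lt_of_le_of_ne (sq_nonneg _) (Ne.symm (pow_ne_zero 2 h0))
    linarith
end
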